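/- For 16-QAM (n = 2): the decision region of the constellation point s²_{(0,2)} = τ(2c_0 + c_2) = τ(1+j) satisfies R(s²_{(0,2)}) = g⁻¹( (B̃_0 + 4·g(0)) ∩ (B̃_2 + 2·g(τ c_0)) ), i.e., the decision region equals the intersection of the base region B̃_0 with the base region B̃_2 shifted by 2·g(τ c_0) = (2τ, 2τ)^T (up to the boundary of the regions). -/

import Mathlib

noncomputable def cpt (i : Fin 4) : ℂ :=
  (Real.sqrt 2 : ℂ) * ((Real.cos (Real.pi / 4 * (1 + 2 * (i : ℕ))) : ℂ) +
    Complex.I * (Real.sin (Real.pi / 4 * (1 + 2 * (i : ℕ))) : ℂ))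

noncomputable def m1 (i : Fin 4) : Fin 2 → ℝ :=
  ![Real.sqrt 2 * Real.cos (Real.pi / 4 * (1 + 2 * (i : ℕ))), 0]

noncomputable def m2 (i : Fin 4) : Fin 2 → ℝ :=
  ![0, Real.sqrt 2 * Real.sin (Real.pi / 4 * (1 + 2 * (i : ℕ)))]

noncomputable def gvec (z : ℂ) : Fin 2 → ℝ := ![z.re, z.im]

/-!
Every coordinate of a constellation point `τ (2 c_{i₁} + c_{i₂})` lies in `τ {±1, ±3}`, and the
squared distance splits into the two coordinates, so the decision region of `τ (1 + j)` is the
product of two one-dimensional ones: the square `[0, 2τ]²`, already cut out by the four nearest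
neighbours `τ (1 + j) ± 2τ`, `τ (1 + j) ± 2τ j`. Its interior, the open square, is the
intersection of the open quadrant at `0` with the opposite open quadrant at `(2τ, 2τ)`.
-/

open Complex Set

lemma sqrt_two_mul_sqrt_two_div_two : √2 * (√2 / 2) = 1 := by
  rw [mul_div_assoc', Real.mul_self_sqrt zero_le_two, div_self two_ne_zero]

lemma cpt_re (i : Fin 4) : (cpt i).re = √2 * Real.cos (Real.pi / 4 * (1 + 2 * (i : ℕ))) := by
  simp only [cpt, mul_re, add_re, add_im, ofReal_re, ofReal_im, I_re, I_im]
  ring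

lemma cpt_im (i : Fin 4) : (cpt i).im = √2 * Real.sin (Real.pi / 4 * (1 + 2 * (i : ℕ))) := by
  simp only [cpt, mul_im, add_re, add_im, mul_re, ofReal_re, ofReal_im, I_re, I_im]
  ring

lemma m1_eq (i : Fin 4) : m1 i = ![(cpt i).re, 0] := by
  rw [m1, cpt_re]

lemma m2_eq (i : Fin 4) : m2 i = ![0, (cpt i).im] := by
  rw [m2, cpt_im]

lemma cpt_zero : cpt 0 = 1 + I := by
  have hθ : Real.pi / 4 * (1 + 2 * ((0 : Fin 4) : ℕ)) = Real.pi / 4 := by simp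
  rw [Complex.ext_iff, cpt_re, cpt_im, hθ]
  simp [sqrt_two_mul_sqrt_two_div_two]

lemma cpt_one : cpt 1 = -1 + I := by
  have hθ : Real.pi / 4 * (1 + 2 * ((1 : Fin 4) : ℕ)) = Real.pi - Real.pi / 4 := by
    rw [show ((1 : Fin 4) : ℕ) = 1 from rfl]; push_cast; ring
  rw [Complex.ext_iff, cpt_re, cpt_im, hθ]
  simp [sqrt_two_mul_sqrt_two_div_two]

lemma cpt_two : cpt 2 = -1 - I := by
  have hθ : Real.pi / 4 * (1 + 2 * ((2 : Fin 4) : ℕ)) = Real.pi / 4 + Real.pi := by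
    rw [show ((2 : Fin 4) : ℕ) = 2 from rfl]; push_cast; ring
  rw [Complex.ext_iff, cpt_re, cpt_im, hθ]
  simp [sqrt_two_mul_sqrt_two_div_two]

lemma cpt_three : cpt 3 = 1 - I := by
  have hθ : Real.pi / 4 * (1 + 2 * ((3 : Fin 4) : ℕ)) = 2 * Real.pi - Real.pi / 4 := by
    rw [show ((3 : Fin 4) : ℕ) = 3 from rfl]; push_cast; ring
  rw [Complex.ext_iff, cpt_re, cpt_im, hθ]
  simp [sqrt_two_mul_sqrt_two_div_two]

lemma cpt_re_eq_one_or (i : Fin 4) : (cpt i).re = 1 ∨ (cpt i).re = -1 := by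
  fin_cases i <;> simp [cpt_zero, cpt_one, cpt_two, cpt_three]

lemma cpt_im_eq_one_or (i : Fin 4) : (cpt i).im = 1 ∨ (cpt i).im = -1 := by
  fin_cases i <;> simp [cpt_zero, cpt_one, cpt_two, cpt_three]

lemma norm_sub_sq_eq_re_im (y z : ℂ) : ‖y - z‖ ^ 2 = (y.re - z.re) ^ 2 + (y.im - z.im) ^ 2 := by
  rw [Complex.sq_norm, normSq_apply, sub_re, sub_im]
  ring

lemma sq_sub_le_sq_sub_of_mem_Icc {τ x ε₁ ε₂ : ℝ} (hx : x ∈ Icc 0 (2 * τ))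
    (h₁ : ε₁ = 1 ∨ ε₁ = -1) (h₂ : ε₂ = 1 ∨ ε₂ = -1) :
    (x - τ) ^ 2 ≤ (x - τ * (2 * ε₁ + ε₂)) ^ 2 := by
  obtain ⟨h0, h2⟩ := hx
  rcases h₁ with rfl | rfl <;> rcases h₂ with rfl | rfl <;> nlinarith

lemma mem_Icc_of_sq_sub_le {τ x : ℝ} (hτ : 0 < τ) (hlo : (x - τ) ^ 2 ≤ (x + τ) ^ 2)
    (hhi : (x - τ) ^ 2 ≤ (x - 3 * τ) ^ 2) : x ∈ Icc 0 (2 * τ) := by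
  constructor <;> nlinarith

lemma norm_sub_constellation_le_iff (y : ℂ) (τ : ℝ) (i₁ i₂ : Fin 4) :
    ‖y - τ * (2 * cpt 0 + cpt 2)‖ ≤ ‖y - τ * (2 * cpt i₁ + cpt i₂)‖ ↔
      (y.re - τ) ^ 2 + (y.im - τ) ^ 2 ≤
        (y.re - τ * (2 * (cpt i₁).re + (cpt i₂).re)) ^ 2 +
          (y.im - τ * (2 * (cpt i₁).im + (cpt i₂).im)) ^ 2 := by
  rw [← sq_le_sq₀ (norm_nonneg _) (norm_nonneg _), norm_sub_sq_eq_re_im, norm_sub_sq_eq_re_im]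
  norm_num [cpt_zero, cpt_two]

lemma decision_region_eq {τ : ℝ} (hτ : 0 < τ) :
    {y : ℂ | ∀ i₁ i₂ : Fin 4, (i₁, i₂) ≠ (0, 2) →
        ‖y - τ * (2 * cpt 0 + cpt 2)‖ ≤ ‖y - τ * (2 * cpt i₁ + cpt i₂)‖} =
      re ⁻¹' Icc 0 (2 * τ) ∩ im ⁻¹' Icc 0 (2 * τ) := by
  ext y
  simp only [norm_sub_constellation_le_iff, mem_ofPred_eq, mem_inter_iff, mem_preimage]
  constructor
  · intro h
    have right := h 0 3 (by decide)
    have left := h 1 3 (by decide)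
    have up := h 0 1 (by decide)
    have down := h 3 1 (by decide)
    norm_num [cpt_zero, cpt_one, cpt_three] at right left up down
    exact ⟨mem_Icc_of_sq_sub_le hτ (by linarith) (by linarith),
      mem_Icc_of_sq_sub_le hτ (by linarith) (by linarith)⟩
  · rintro ⟨hre, him⟩ i₁ i₂ -
    exact add_le_add
      (sq_sub_le_sq_sub_of_mem_Icc hre (cpt_re_eq_one_or i₁) (cpt_re_eq_one_or i₂))
      (sq_sub_le_sq_sub_of_mem_Icc him (cpt_im_eq_one_or i₁) (cpt_im_eq_one_or i₂))

lemma gvec_eq_iff (y : ℂ) (w : Fin 2 → ℝ) : gvec y = w ↔ y.re = w 0 ∧ y.im = w 1 := by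
  rw [gvec, ← List.ofFn_inj, List.ofFn_succ, List.ofFn_succ, List.ofFn_zero]
  simp

lemma exists_pos_smul_add_eq_iff (y : ℂ) {u v : ℝ} (hu : u ≠ 0) (hv : v ≠ 0) (q : Fin 2 → ℝ) :
    (∃ a b : ℝ, 0 < a ∧ 0 < b ∧ gvec y = a • ![u, 0] + b • ![0, v] + q) ↔
      0 < (y.re - q 0) * u ∧ 0 < (y.im - q 1) * v := by
  simp only [gvec_eq_iff, Pi.add_apply, Pi.smul_apply, Matrix.cons_val_zero, Matrix.cons_val_one,
    smul_eq_mul, mul_zero, add_zero, zero_add]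
  constructor
  · rintro ⟨a, b, ha, hb, hre, him⟩
    rw [hre, him, add_sub_cancel_right, add_sub_cancel_right, mul_assoc, mul_assoc]
    exact ⟨mul_pos ha (mul_self_pos.2 hu), mul_pos hb (mul_self_pos.2 hv)⟩
  · rintro ⟨hre, him⟩
    refine ⟨(y.re - q 0) / u, (y.im - q 1) / v, ?_, ?_, ?_, ?_⟩
    · rwa [div_pos_iff, ← mul_pos_iff]
    · rwa [div_pos_iff, ← mul_pos_iff]
    · field_simp; ring
    · field_simp; ring

theorem stmt15 (τ : ℝ) (hτ : 0 < τ) :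
    interior {y : ℂ | ∀ i₁ i₂ : Fin 4, (i₁, i₂) ≠ ((0 : Fin 4), (2 : Fin 4)) →
        ‖y - (τ : ℂ) * (2 * cpt 0 + cpt 2)‖ ≤
          ‖y - (τ : ℂ) * (2 * cpt i₁ + cpt i₂)‖} =
    {y : ℂ |
      (∃ a b : ℝ, 0 < a ∧ 0 < b ∧
        gvec y = a • m1 0 + b • m2 0 + (4 : ℝ) • gvec 0) ∧
      (∃ a b : ℝ, 0 < a ∧ 0 < b ∧
        gvec y = a • m1 2 + b • m2 2 + (2 : ℝ) • gvec ((τ : ℂ) * cpt 0))} := by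
  rw [decision_region_eq hτ, interior_inter, interior_preimage_re, interior_preimage_im,
    interior_Icc]
  ext y
  simp only [mem_inter_iff, mem_preimage, mem_Ioo, mem_ofPred_eq, m1_eq, m2_eq, cpt_zero, cpt_two]
  rw [exists_pos_smul_add_eq_iff _ (by simp) (by simp),
    exists_pos_smul_add_eq_iff _ (by simp) (by simp)]
  simp [gvec]
  tauto
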